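/- Let ι : U →L L²(μ, ℂ) be a continuous linear map, let θ, θ̃ ∈ X, and let E, Ẽ : W →L U be two-sided inverses of D(θ) and D(θ̃) with ‖E‖ ≤ M₁ and ‖Ẽ‖ ≤ M₂. Let f₁, …, f_J ∈ W (J ≥ 1) and set u_j := E f_j, v_j := Ẽ f_j, and φ_j := −E((B u_j)(θ − θ̃)). Define the covariance kernels F := (1/J) Σ_j (ι u_j) ⊗ conj(ι u_j) and F̃ := (1/J) Σ_j (ι v_j) ⊗ conj(ι v_j), and the linearization kernel T := (1/J) Σ_j [ (ι u_j) ⊗ conj(ι φ_j) + (ι φ_j) ⊗ conj(ι u_j) ]. Assume (lifted regularity) that there exist Ĉ ≥ 0 and a continuous linear operator G : L²(μ, ℂ) →L L²(μ, ℂ) with ‖G‖ ≤ Ĉ · ‖θ − θ̃‖_X such that G(ι u_j) = ι(E((D(θ) − D(θ̃)) u_j)) and G(ι v_j) = ι(E((D(θ) − D(θ̃)) v_j)) for every j. Then the first-order linearization error of the parameter-to-covariance map satisfies the tangential-cone-like bound ‖F − F̃ − T‖_{L²(μ×μ)} ≤ Ĉ · ‖θ − θ̃‖_X · ‖F − F̃‖_{L²(μ×μ)}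 + ‖ι‖² · ‖B‖² · M₁³ · M₂ · ((1/J) Σ_{j=1}^{J} ‖f_j‖²_W) · ‖θ − θ̃‖²_X. -/

import Mathlib

/-!
Write `a j = ι (u j)` and `b j = ι (v j)`. Since `E ∘ (D θ - D θ') ∘ E' = E' - E`, the lifted
operator satisfies `G (b j) = b j - a j`, while `ι (φ j) = -G (a j)`. Hence, almost everywhere,

  `F - F̃ - T = (1/J) ∑ (a j ⊗ conj (G (a j)) - b j ⊗ conj (G (b j)))`
  `          + (1/J) ∑ (G (a j) - G (b j)) ⊗ conj (a j)`.

For fixed `x`, the first kernel is, as a function of `y`, the conjugate of `G` applied to the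
`x`-slice of `F - F̃`; by Tonelli its `L²` norm is at most `‖G‖ ‖F - F̃‖`. In the second,
`G (a j) - G (b j) = ι (E (B (u j - v j) (θ - θ')))` is quadratic in `θ - θ'`, and
`‖g ⊗ conj h‖ = ‖g‖ ‖h‖`.
-/

open MeasureTheory ComplexConjugate
open scoped ENNReal

section L2Kernels

variable {𝕜 α β : Type*} [RCLike 𝕜] [MeasurableSpace α] [MeasurableSpace β]
  {μ : Measure α} {ν : Measure β}

lemma sq_eLpNorm_two_eq_lintegral {E : Type*} [NormedAddCommGroup E] (f : α → E) :
    eLpNorm f 2 μ ^ 2 = ∫⁻ x, ‖f x‖ₑ ^ 2 ∂μ := by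
  simpa using eLpNorm_nnreal_pow_eq_lintegral (f := f) (μ := μ) (p := 2) two_ne_zero

lemma sq_eLpNorm_two_prod_le_lintegral {E : Type*} [NormedAddCommGroup E] (f : α × β → E) :
    eLpNorm f 2 (μ.prod ν) ^ 2 ≤ ∫⁻ x, eLpNorm (fun y => f (x, y)) 2 ν ^ 2 ∂μ := by
  simpa only [sq_eLpNorm_two_eq_lintegral] using lintegral_prod_le _

lemma sq_eLpNorm_two_prod_eq_lintegral [SFinite ν] {E : Type*} [NormedAddCommGroup E]
    {f : α × β → E}
    (hf : AEStronglyMeasurable f (μ.prod ν)) :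
    eLpNorm f 2 (μ.prod ν) ^ 2 = ∫⁻ x, eLpNorm (fun y => f (x, y)) 2 ν ^ 2 ∂μ := by
  simpa only [sq_eLpNorm_two_eq_lintegral] using lintegral_prod _ (hf.enorm.pow_const 2)

lemma eLpNorm_two_prod_le_of_ae_slice_le [SFinite ν] {E F : Type*} [NormedAddCommGroup E]
    [NormedAddCommGroup F] {f : α × β → E} {g : α × β → F}
    (hf : AEStronglyMeasurable f (μ.prod ν)) {c : ℝ≥0∞} (hc : c ≠ ⊤)
    (h : ∀ᵐ x ∂μ, eLpNorm (fun y => g (x, y)) 2 ν ≤ c * eLpNorm (fun y => f (x, y)) 2 ν) :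
    eLpNorm g 2 (μ.prod ν) ≤ c * eLpNorm f 2 (μ.prod ν) := by
  rw [← ENNReal.pow_le_pow_left_iff two_ne_zero]
  calc eLpNorm g 2 (μ.prod ν) ^ 2
      ≤ ∫⁻ x, eLpNorm (fun y => g (x, y)) 2 ν ^ 2 ∂μ := sq_eLpNorm_two_prod_le_lintegral g
    _ ≤ ∫⁻ x, c ^ 2 * eLpNorm (fun y => f (x, y)) 2 ν ^ 2 ∂μ :=
        lintegral_mono_ae <| h.mono fun x hx => by rw [← mul_pow]; gcongr
    _ = (c * eLpNorm f 2 (μ.prod ν)) ^ 2 := by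
        rw [lintegral_const_mul' _ _ (by simp [hc]), ← sq_eLpNorm_two_prod_eq_lintegral hf, mul_pow]

lemma aestronglyMeasurable_mul_conj_prod {g : α → 𝕜} {h : β → 𝕜}
    (hg : AEStronglyMeasurable g μ) (hh : AEStronglyMeasurable h ν) :
    AEStronglyMeasurable (fun p : α × β => g p.1 * conj (h p.2)) (μ.prod ν) :=
  hg.comp_fst.mul (RCLike.continuous_conj.comp_aestronglyMeasurable hh).comp_snd

lemma eLpNorm_mul_conj_prod [SFinite ν] {g : α → 𝕜} {h : β → 𝕜}
    (hg : AEStronglyMeasurable g μ) (hh : AEStronglyMeasurable h ν) :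
    eLpNorm (fun p : α × β => g p.1 * conj (h p.2)) 2 (μ.prod ν)
      = eLpNorm g 2 μ * eLpNorm h 2 ν := by
  rw [← (ENNReal.pow_right_strictMono two_ne_zero).injective.eq_iff,
    sq_eLpNorm_two_prod_eq_lintegral (aestronglyMeasurable_mul_conj_prod hg hh)]
  have hslice : ∀ x, eLpNorm (fun y => g x * conj (h y)) 2 ν = ‖g x‖ₑ * eLpNorm h 2 ν := by
    intro x
    rw [← eLpNorm_conj h, ← eLpNorm_const_smul]
    rfl
  simp_rw [hslice, mul_pow]
  rw [lintegral_mul_const'' _ (hg.enorm.pow_const 2), ← sq_eLpNorm_two_eq_lintegral]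

lemma eLpNorm_sum_mul_conj {ι : Type*} [Fintype ι] (w : ι → 𝕜) (b : ι → Lp 𝕜 2 ν) :
    eLpNorm (fun y => ∑ i, w i * conj (b i y)) 2 ν = ‖∑ i, conj (w i) • b i‖ₑ := by
  rw [Lp.enorm_def, ← eLpNorm_conj]
  refine eLpNorm_congr_ae ?_
  filter_upwards [Lp.coeFn_fun_finsetSum Finset.univ (fun i => conj (w i) • b i),
    ae_all_iff.2 fun i => Lp.coeFn_smul (conj (w i)) (b i)] with y hsum hsmul
  simp only [starRingEnd_apply, Pi.star_apply, Pi.smul_apply, smul_eq_mul] at hsum hsmul ⊢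
  simp only [hsum, hsmul, star_sum, star_mul', star_star]

lemma eLpNorm_sum_mul_conj_map_le [SFinite ν] {ι : Type*} [Fintype ι] {w : ι → α → 𝕜}
    (hw : ∀ i, AEStronglyMeasurable (w i) μ) (b : ι → Lp 𝕜 2 ν)
    (G : Lp 𝕜 2 ν →L[𝕜] Lp 𝕜 2 ν) :
    eLpNorm (fun p : α × β => ∑ i, w i p.1 * conj (G (b i) p.2)) 2 (μ.prod ν)
      ≤ ‖G‖ₑ * eLpNorm (fun p : α × β => ∑ i, w i p.1 * conj (b i p.2)) 2 (μ.prod ν) := by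
  refine eLpNorm_two_prod_le_of_ae_slice_le (Finset.aestronglyMeasurable_fun_sum _ fun i _ =>
    aestronglyMeasurable_mul_conj_prod (hw i) (Lp.aestronglyMeasurable _)) enorm_ne_top
    (ae_of_all _ fun x => ?_)
  rw [eLpNorm_sum_mul_conj (fun i => w i x), eLpNorm_sum_mul_conj (fun i => w i x)]
  simp only [← ContinuousLinearMap.map_smul, ← map_sum]
  exact G.le_opENorm _

lemma eLpNorm_const_mul_sum_mul_conj_prod_le [SFinite ν] {ι : Type*} [Fintype ι] (c : 𝕜)
    (g : ι → Lp 𝕜 2 μ) (h : ι → Lp 𝕜 2 ν) :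
    eLpNorm (fun p : α × β => c * ∑ i, g i p.1 * conj (h i p.2)) 2 (μ.prod ν)
      ≤ ENNReal.ofReal (‖c‖ * ∑ i, ‖g i‖ * ‖h i‖) := by
  have hsum : eLpNorm (fun p : α × β => ∑ i, g i p.1 * conj (h i p.2)) 2 (μ.prod ν)
      ≤ ∑ i, ‖g i‖ₑ * ‖h i‖ₑ := by
    rw [← Finset.sum_fn]
    refine (eLpNorm_sum_le (fun i _ => aestronglyMeasurable_mul_conj_prod
      (Lp.aestronglyMeasurable (g i)) (Lp.aestronglyMeasurable (h i))) one_le_two).trans_eq ?_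
    refine Finset.sum_congr rfl fun i _ => ?_
    rw [eLpNorm_mul_conj_prod (Lp.aestronglyMeasurable (g i)) (Lp.aestronglyMeasurable (h i)),
      Lp.enorm_def, Lp.enorm_def]
  calc _ = ‖c‖ₑ * eLpNorm (fun p : α × β => ∑ i, g i p.1 * conj (h i p.2)) 2 (μ.prod ν) := by
        rw [← eLpNorm_const_smul]; rfl
    _ ≤ ‖c‖ₑ * ∑ i, ‖g i‖ₑ * ‖h i‖ₑ := by gcongr
    _ = _ := by
        rw [ENNReal.ofReal_mul (norm_nonneg _),
          ENNReal.ofReal_sum_of_nonneg fun i _ => by positivity]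
        simp only [ENNReal.ofReal_mul (norm_nonneg _), ofReal_norm]

end L2Kernels

section Linearization

variable {𝕜 Ω : Type*} [RCLike 𝕜] [MeasurableSpace Ω] {μ : Measure Ω}

lemma eLpNorm_const_mul_sum_sub_map_le [SFinite μ] {ι : Type*} [Fintype ι] (c : 𝕜)
    (a b : ι → Lp 𝕜 2 μ) (G : Lp 𝕜 2 μ →L[𝕜] Lp 𝕜 2 μ) :
    eLpNorm (fun p : Ω × Ω =>
        c * ∑ j, (a j p.1 * conj (G (a j) p.2) - b j p.1 * conj (G (b j) p.2))) 2 (μ.prod μ)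
      ≤ ‖G‖ₑ * eLpNorm (fun p : Ω × Ω => c * ∑ j, a j p.1 * conj (a j p.2)
          - c * ∑ j, b j p.1 * conj (b j p.2)) 2 (μ.prod μ) := by
  set w : ι ⊕ ι → Ω → 𝕜 := Sum.elim (fun j x => c * a j x) (fun j x => -(c * b j x))
  set e : ι ⊕ ι → Lp 𝕜 2 μ := Sum.elim a b
  have hw : ∀ i, AEStronglyMeasurable (w i) μ := by
    rintro (j | j)
    · exact (Lp.aestronglyMeasurable (a j)).const_mul c
    · exact ((Lp.aestronglyMeasurable (b j)).const_mul c).neg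
  have hG : (fun p : Ω × Ω =>
      c * ∑ j, (a j p.1 * conj (G (a j) p.2) - b j p.1 * conj (G (b j) p.2)))
      = fun p => ∑ i, w i p.1 * conj (G (e i) p.2) := by
    funext p
    simp only [w, e, Fintype.sum_sum_type, Sum.elim_inl, Sum.elim_inr, Finset.mul_sum, neg_mul,
      Finset.sum_neg_distrib, mul_assoc, sub_eq_add_neg, mul_add, mul_neg, Finset.sum_add_distrib]
  have hid : (fun p : Ω × Ω => c * ∑ j, a j p.1 * conj (a j p.2)
      - c * ∑ j, b j p.1 * conj (b j p.2)) = fun p => ∑ i, w i p.1 * conj (e i p.2) := by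
    funext p
    simp only [w, e, Fintype.sum_sum_type, Sum.elim_inl, Sum.elim_inr, Finset.mul_sum,
      neg_mul, Finset.sum_neg_distrib, mul_assoc, sub_eq_add_neg]
  rw [hG, hid]
  exact eLpNorm_sum_mul_conj_map_le hw e G

lemma covariance_linearization_error_ae_eq {ι : Type*} [Fintype ι] (c : 𝕜)
    (a b t : ι → Lp 𝕜 2 μ) (G : Lp 𝕜 2 μ →L[𝕜] Lp 𝕜 2 μ)
    (ht : ∀ j, t j = -G (a j)) (hb : ∀ j, G (b j) = b j - a j) :
    (fun p : Ω × Ω => c * ∑ j, a j p.1 * conj (a j p.2)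
        - c * ∑ j, b j p.1 * conj (b j p.2)
        - c * ∑ j, (a j p.1 * conj (t j p.2) + t j p.1 * conj (a j p.2)))
      =ᵐ[μ.prod μ]
        (fun p => c * ∑ j, (a j p.1 * conj (G (a j) p.2) - b j p.1 * conj (G (b j) p.2)))
        + fun p => c * ∑ j, (G (a j) - G (b j)) p.1 * conj (a j p.2) := by
  have hpt : ∀ᵐ y ∂μ, ∀ j, t j y = -G (a j) y ∧ G (b j) y = b j y - a j y
      ∧ (G (a j) - G (b j)) y = G (a j) y - G (b j) y := by
    refine ae_all_iff.2 fun j => ?_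
    have ht' : ⇑(t j) =ᵐ[μ] -⇑(G (a j)) := by rw [ht j]; exact Lp.coeFn_neg _
    have hb' : ⇑(G (b j)) =ᵐ[μ] ⇑(b j) - ⇑(a j) := by rw [hb j]; exact Lp.coeFn_sub _ _
    filter_upwards [ht', hb', Lp.coeFn_sub (G (a j)) (G (b j))] with y h1 h2 h3
    exact ⟨h1, h2, h3⟩
  filter_upwards [Measure.quasiMeasurePreserving_fst.ae hpt,
    Measure.quasiMeasurePreserving_snd.ae hpt] with p h1 h2
  simp only [Pi.add_apply, h1, h2, map_neg, map_sub, ← mul_add, ← mul_sub,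
    ← Finset.sum_add_distrib, ← Finset.sum_sub_distrib]
  exact congrArg (c * ·) (Finset.sum_congr rfl fun j _ => by ring)

lemma eLpNorm_covariance_linearization_error_le [SFinite μ] {ι : Type*} [Fintype ι] (c : 𝕜)
    (a b t : ι → Lp 𝕜 2 μ) (G : Lp 𝕜 2 μ →L[𝕜] Lp 𝕜 2 μ)
    (ht : ∀ j, t j = -G (a j)) (hb : ∀ j, G (b j) = b j - a j) :
    eLpNorm (fun p : Ω × Ω => c * ∑ j, a j p.1 * conj (a j p.2)
        - c * ∑ j, b j p.1 * conj (b j p.2)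
        - c * ∑ j, (a j p.1 * conj (t j p.2) + t j p.1 * conj (a j p.2))) 2 (μ.prod μ)
      ≤ ‖G‖ₑ * eLpNorm (fun p : Ω × Ω => c * ∑ j, a j p.1 * conj (a j p.2)
          - c * ∑ j, b j p.1 * conj (b j p.2)) 2 (μ.prod μ)
        + ENNReal.ofReal (‖c‖ * ∑ j, ‖G (a j) - G (b j)‖ * ‖a j‖) := by
  rw [eLpNorm_congr_ae (covariance_linearization_error_ae_eq c a b t G ht hb)]
  refine (eLpNorm_add_le ?_ ?_ one_le_two).trans (add_le_add
    (eLpNorm_const_mul_sum_sub_map_le c a b G)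
    (eLpNorm_const_mul_sum_mul_conj_prod_le c (fun j => G (a j) - G (b j)) a))
  all_goals refine (Finset.aestronglyMeasurable_fun_sum _ fun j _ => ?_).const_mul c
  · exact (aestronglyMeasurable_mul_conj_prod (Lp.aestronglyMeasurable _)
      (Lp.aestronglyMeasurable _)).sub
      (aestronglyMeasurable_mul_conj_prod (Lp.aestronglyMeasurable _) (Lp.aestronglyMeasurable _))
  · exact aestronglyMeasurable_mul_conj_prod (Lp.aestronglyMeasurable _)
      (Lp.aestronglyMeasurable _)

end Linearization

section AffineModel

variable {𝕜 X U V W : Type*} [NontriviallyNormedField 𝕜]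
  [NormedAddCommGroup X] [NormedSpace 𝕜 X] [NormedAddCommGroup U] [NormedSpace 𝕜 U]
  [NormedAddCommGroup V] [NormedSpace 𝕜 V] [NormedAddCommGroup W] [NormedSpace 𝕜 W]

lemma affine_sub_apply {K : U →L[𝕜] W} {B : U →L[𝕜] X →L[𝕜] W} {D : X → U →L[𝕜] W}
    (hD : ∀ θ u, D θ u = K u + B u θ) (θ θ' : X) (z : U) :
    (D θ - D θ') z = B z (θ - θ') := by
  rw [sub_apply, hD, hD, map_sub]
  abel

lemma inverse_sub_inverse_apply {L L' : U →L[𝕜] W} {E E' : W →L[𝕜] U}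
    (hE : E.comp L = ContinuousLinearMap.id 𝕜 U) (hE' : L'.comp E' = ContinuousLinearMap.id 𝕜 W)
    (w : W) : E' w - E w = E ((L - L') (E' w)) := by
  have hEL : E (L (E' w)) = E' w := congr($hE (E' w))
  have hLE : L' (E' w) = w := congr($hE' w)
  rw [sub_apply, map_sub, hEL, hLE]

lemma norm_apply_bilinear_le (L : W →L[𝕜] V) (B : U →L[𝕜] X →L[𝕜] W) (z : U) (h : X) :
    ‖L (B z h)‖ ≤ ‖L‖ * ‖B‖ * ‖z‖ * ‖h‖ := by
  refine (L.le_opNorm _).trans ?_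
  simpa only [mul_assoc] using mul_le_mul_of_nonneg_left (B.le_opNorm₂ z h) (norm_nonneg L)

variable {K : U →L[𝕜] W} {B : U →L[𝕜] X →L[𝕜] W} {D : X → U →L[𝕜] W} {θ θ' : X}
  {E E' : W →L[𝕜] U} {M₁ M₂ : ℝ}

lemma norm_inverse_sub_inverse_apply_le (hD : ∀ θ u, D θ u = K u + B u θ)
    (hE : E.comp (D θ) = ContinuousLinearMap.id 𝕜 U)
    (hE' : (D θ').comp E' = ContinuousLinearMap.id 𝕜 W) (hM₁ : ‖E‖ ≤ M₁) (hM₂ : ‖E'‖ ≤ M₂)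
    (w : W) : ‖E w - E' w‖ ≤ M₁ * ‖B‖ * M₂ * ‖θ - θ'‖ * ‖w‖ := by
  rw [norm_sub_rev, inverse_sub_inverse_apply hE hE', affine_sub_apply hD]
  calc _ ≤ ‖E‖ * ‖B‖ * ‖E' w‖ * ‖θ - θ'‖ := norm_apply_bilinear_le E B _ _
    _ ≤ M₁ * ‖B‖ * (M₂ * ‖w‖) * ‖θ - θ'‖ := by
        have hM₁' := (norm_nonneg E).trans hM₁
        gcongr
        exact E'.le_of_opNorm_le hM₂ w
    _ = _ := by ring

lemma norm_linearization_remainder_le (hD : ∀ θ u, D θ u = K u + B u θ)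
    (hE : E.comp (D θ) = ContinuousLinearMap.id 𝕜 U)
    (hE' : (D θ').comp E' = ContinuousLinearMap.id 𝕜 W) (hM₁ : ‖E‖ ≤ M₁) (hM₂ : ‖E'‖ ≤ M₂)
    (ι : U →L[𝕜] V) (w : W) :
    ‖ι (E (B (E w - E' w) (θ - θ')))‖ * ‖ι (E w)‖
      ≤ ‖ι‖ ^ 2 * ‖B‖ ^ 2 * M₁ ^ 3 * M₂ * ‖θ - θ'‖ ^ 2 * ‖w‖ ^ 2 := by
  have hM₁' := (norm_nonneg E).trans hM₁
  have hιE : ‖ι.comp E‖ ≤ ‖ι‖ * M₁ :=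
    (ι.opNorm_comp_le E).trans (mul_le_mul_of_nonneg_left hM₁ (norm_nonneg ι))
  have hfirst : ‖ι (E (B (E w - E' w) (θ - θ')))‖
      ≤ ‖ι‖ * M₁ * ‖B‖ * (M₁ * ‖B‖ * M₂ * ‖θ - θ'‖ * ‖w‖) * ‖θ - θ'‖ := by
    refine (norm_apply_bilinear_le (ι.comp E) B _ _).trans ?_
    gcongr
    exact norm_inverse_sub_inverse_apply_le hD hE hE' hM₁ hM₂ w
  calc _ ≤ _ := mul_le_mul hfirst ((ι.comp E).le_of_opNorm_le hιE w) (norm_nonneg _)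
        ((norm_nonneg _).trans hfirst)
    _ = _ := by ring

end AffineModel

theorem statement15_general
    {Ω : Type*} [MeasurableSpace Ω] (μ : Measure Ω) [SigmaFinite μ]
    {X U W : Type*} [NormedAddCommGroup X] [NormedSpace ℂ X]
    [NormedAddCommGroup U] [NormedSpace ℂ U]
    [NormedAddCommGroup W] [NormedSpace ℂ W]
    (K : U →L[ℂ] W) (B : U →L[ℂ] X →L[ℂ] W)
    (D : X → U →L[ℂ] W) (hD : ∀ θ u, D θ u = K u + B u θ)
    (ι : U →L[ℂ] Lp ℂ 2 μ)
    (θ θ' : X) (E E' : W →L[ℂ] U)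
    (hE1 : E.comp (D θ) = ContinuousLinearMap.id ℂ U)
    (hE2' : (D θ').comp E' = ContinuousLinearMap.id ℂ W)
    (M₁ M₂ : ℝ) (hM1 : ‖E‖ ≤ M₁) (hM2 : ‖E'‖ ≤ M₂)
    (J : ℕ) (f : Fin J → W)
    (u v φ : Fin J → U)
    (hu : ∀ j, u j = E (f j)) (hv : ∀ j, v j = E' (f j))
    (hφ : ∀ j, φ j = -(E ((B (u j)) (θ - θ'))))
    (Fk Ftk Tk : Ω × Ω → ℂ)
    (hFk : ∀ p, Fk p = (1 / (J : ℂ)) * ∑ j, ι (u j) p.1 * conj (ι (u j) p.2))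
    (hFtk : ∀ p, Ftk p = (1 / (J : ℂ)) * ∑ j, ι (v j) p.1 * conj (ι (v j) p.2))
    (hTk : ∀ p, Tk p = (1 / (J : ℂ)) * ∑ j,
        (ι (u j) p.1 * conj (ι (φ j) p.2) + ι (φ j) p.1 * conj (ι (u j) p.2)))
    (Ch : ℝ)
    (G : Lp ℂ 2 μ →L[ℂ] Lp ℂ 2 μ)
    (hGnorm : ‖G‖ ≤ Ch * ‖θ - θ'‖)
    (hGu : ∀ j, G (ι (u j)) = ι (E ((D θ - D θ') (u j))))
    (hGv : ∀ j, G (ι (v j)) = ι (E ((D θ - D θ') (v j)))) :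
    eLpNorm (fun p : Ω × Ω => Fk p - Ftk p - Tk p) 2 (μ.prod μ)
      ≤ ENNReal.ofReal (Ch * ‖θ - θ'‖)
          * eLpNorm (fun p : Ω × Ω => Fk p - Ftk p) 2 (μ.prod μ)
        + ENNReal.ofReal (‖ι‖ ^ 2 * ‖B‖ ^ 2 * M₁ ^ 3 * M₂
            * ((1 / (J : ℝ)) * ∑ j, ‖f j‖ ^ 2) * ‖θ - θ'‖ ^ 2) := by
  have hdiff := affine_sub_apply hD θ θ'
  have hterm : ∀ j, ‖G (ι (u j)) - G (ι (v j))‖ * ‖ι (u j)‖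
      ≤ ‖ι‖ ^ 2 * ‖B‖ ^ 2 * M₁ ^ 3 * M₂ * ‖θ - θ'‖ ^ 2 * ‖f j‖ ^ 2 := by
    intro j
    rw [hGu, hGv, ← map_sub, ← map_sub, ← map_sub, hdiff, hu, hv]
    exact norm_linearization_remainder_le hD hE1 hE2' hM1 hM2 ι (f j)
  simp only [hFk, hFtk, hTk]
  refine (eLpNorm_covariance_linearization_error_le (1 / (J : ℂ)) (fun j => ι (u j))
    (fun j => ι (v j)) (fun j => ι (φ j)) G (fun j => ?_) (fun j => ?_)).trans
    (add_le_add ?_ (ENNReal.ofReal_le_ofReal ?_))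
  · rw [hφ, map_neg, hGu, hdiff]
  · rw [hGv, hv, ← inverse_sub_inverse_apply hE1 hE2', map_sub, ← hu]
  · rw [← ofReal_norm]
    gcongr
  · calc _ ≤ ‖(1 / (J : ℂ))‖ * ∑ j, ‖ι‖ ^ 2 * ‖B‖ ^ 2 * M₁ ^ 3 * M₂ * ‖θ - θ'‖ ^ 2 * ‖f j‖ ^ 2 :=
          mul_le_mul_of_nonneg_left (Finset.sum_le_sum fun j _ => hterm j) (norm_nonneg _)
      _ = _ := by
          rw [← Finset.mul_sum]
          simp only [one_div, norm_inv, Complex.norm_natCast]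
          ring

/-- the tangential-cone-like bound for the first-order
linearization error of the parameter-to-covariance map. -/
theorem statement15
    {Ω : Type*} [MeasurableSpace Ω] (μ : Measure Ω) [SigmaFinite μ]
    {X U W : Type*} [NormedAddCommGroup X] [NormedSpace ℂ X]
    [NormedAddCommGroup U] [NormedSpace ℂ U] [CompleteSpace U]
    [NormedAddCommGroup W] [NormedSpace ℂ W] [CompleteSpace W]
    (K : U →L[ℂ] W) (B : U →L[ℂ] X →L[ℂ] W)
    (D : X → U →L[ℂ] W) (hD : ∀ θ u, D θ u = K u + B u θ)
    (ι : U →L[ℂ] Lp ℂ 2 μ)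
    (θ θ' : X) (E E' : W →L[ℂ] U)
    (hE1 : E.comp (D θ) = ContinuousLinearMap.id ℂ U)
    (hE2 : (D θ).comp E = ContinuousLinearMap.id ℂ W)
    (hE1' : E'.comp (D θ') = ContinuousLinearMap.id ℂ U)
    (hE2' : (D θ').comp E' = ContinuousLinearMap.id ℂ W)
    (M₁ M₂ : ℝ) (hM1 : ‖E‖ ≤ M₁) (hM2 : ‖E'‖ ≤ M₂)
    (J : ℕ) (hJ : 1 ≤ J) (f : Fin J → W)
    (u v φ : Fin J → U)
    (hu : ∀ j, u j = E (f j)) (hv : ∀ j, v j = E' (f j))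
    (hφ : ∀ j, φ j = -(E ((B (u j)) (θ - θ'))))
    (Fk Ftk Tk : Ω × Ω → ℂ)
    (hFk : ∀ p, Fk p = (1 / (J : ℂ)) * ∑ j, ι (u j) p.1 * conj (ι (u j) p.2))
    (hFtk : ∀ p, Ftk p = (1 / (J : ℂ)) * ∑ j, ι (v j) p.1 * conj (ι (v j) p.2))
    (hTk : ∀ p, Tk p = (1 / (J : ℂ)) * ∑ j,
        (ι (u j) p.1 * conj (ι (φ j) p.2) + ι (φ j) p.1 * conj (ι (u j) p.2)))
    (Ch : ℝ) (hCh : 0 ≤ Ch)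
    (G : Lp ℂ 2 μ →L[ℂ] Lp ℂ 2 μ)
    (hGnorm : ‖G‖ ≤ Ch * ‖θ - θ'‖)
    (hGu : ∀ j, G (ι (u j)) = ι (E ((D θ - D θ') (u j))))
    (hGv : ∀ j, G (ι (v j)) = ι (E ((D θ - D θ') (v j)))) :
    eLpNorm (fun p : Ω × Ω => Fk p - Ftk p - Tk p) 2 (μ.prod μ)
      ≤ ENNReal.ofReal (Ch * ‖θ - θ'‖)
          * eLpNorm (fun p : Ω × Ω => Fk p - Ftk p) 2 (μ.prod μ)
        + ENNReal.ofReal (‖ι‖ ^ 2 * ‖B‖ ^ 2 * M₁ ^ 3 * M₂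
            * ((1 / (J : ℝ)) * ∑ j, ‖f j‖ ^ 2) * ‖θ - θ'‖ ^ 2) :=
  statement15_general μ K B D hD ι θ θ' E E' hE1 hE2' M₁ M₂ hM1 hM2 J f u v φ hu hv hφ Fk Ftk Tk hFk
    hFtk hTk Ch G hGnorm hGu hGv
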